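/- arXiv:1207.5944 — 6 statements merged into one kernel-verified Lean document; each statement's English description precedes it below -/
import Mathlib

section
/- Let k, m be positive integers with 2k ≤ m, and let l = lcm(k,m). Define the folded height h(t) ∈ {0,…,2k-1} of an integer t by h(t) = t mod 4k if t mod 4k < 2k, else h(t) = 4k-1-(t mod 4k). Then 2l-1 is the least positive integer of the form 2jm-1 (j ≥ 1) such that h(2k-1-(2jm-1)) ∈ {0, 2k-1}; that is, the unfolded particle path starting at (1, 2k-1) with slope -1 first reaches height 0 or 2k-1 at an x-displacement of the form 2jm-1 exactly at x-displacement 2l-1. -/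
lemma fold_cond (K a : ℤ) (hK : 0 < K) :
    ((if (2*K - 2*a) % (4*K) < 2*K then (2*K - 2*a) % (4*K)
      else 4*K - 1 - (2*K - 2*a) % (4*K)) = 0 ∨
     (if (2*K - 2*a) % (4*K) < 2*K then (2*K - 2*a) % (4*K)
      else 4*K - 1 - (2*K - 2*a) % (4*K)) = 2*K - 1) ↔ K ∣ a := by
  have h4 : 0 < 4*K := by linarith
  set t : ℤ := 2*K - 2*a with ht
  have hr0 : 0 ≤ t % (4*K) := Int.emod_nonneg _ (by positivity)
  have hr1 : t % (4*K) < 4*K := Int.emod_lt_of_pos _ h4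
  have hre : t % (4*K) % 2 = 0 := by
    rw [Int.emod_emod_of_dvd _ ⟨2*K, by ring⟩]
    omega
  constructor
  · intro hc
    have hq : 4*K*(t / (4*K)) + t % (4*K) = t := Int.mul_ediv_add_emod t (4*K)
    have : t % (4*K) = 0 ∨ t % (4*K) = 2*K := by
      rcases hc with hc | hc <;> split_ifs at hc <;> omega
    rcases this with h0 | h2
    · exact ⟨1 - 2*(t / (4*K)), by linarith [hq]⟩
    · exact ⟨-2*(t / (4*K)), by linarith [hq]⟩
  · rintro ⟨q, rfl⟩
    rcases Int.even_or_odd q with ⟨s, hs⟩ | ⟨s, hs⟩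
    · right
      have hteq : t = 2*K + 4*K*(-s) := by rw [ht, hs]; ring
      have : t % (4*K) = 2*K := by
        rw [hteq, Int.add_mul_emod_self_left, Int.emod_eq_of_lt (by linarith) (by linarith)]
      rw [this]
      rw [if_neg (by linarith)]
      ring
    · left
      have hteq : t = 4*K*(-s) := by rw [ht, hs]; ring
      have : t % (4*K) = 0 := by rw [hteq, Int.mul_emod_right]
      rw [this, if_pos (by linarith)]

theorem particle_stops_at_lcm (k m : ℕ) (hk : 1 ≤ k) (hkm : 2 * k ≤ m)
    (l : ℕ) (hl : l = Nat.lcm k m) (h : ℤ → ℤ)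
    (hh : ∀ x : ℤ, h x =
      if x % (4 * (k : ℤ)) < 2 * (k : ℤ) then x % (4 * (k : ℤ))
      else 4 * (k : ℤ) - 1 - x % (4 * (k : ℤ))) :
    IsLeast {x : ℤ | 0 < x ∧ (∃ j : ℕ, 1 ≤ j ∧ x = 2 * (j : ℤ) * (m : ℤ) - 1) ∧
        (h (2 * (k : ℤ) - 1 - x) = 0 ∨ h (2 * (k : ℤ) - 1 - x) = 2 * (k : ℤ) - 1)}
      (2 * (l : ℤ) - 1) := by
  have hm : 1 ≤ m := by omega
  have hK : (0:ℤ) < (k:ℤ) := by exact_mod_cast hk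
  have hlpos : 0 < l := by
    rw [hl]; exact Nat.pos_of_ne_zero (Nat.lcm_ne_zero (by omega) (by omega))
  obtain ⟨j0, hj0⟩ : m ∣ l := hl ▸ Nat.dvd_lcm_right k m
  have hj0pos : 1 ≤ j0 := by
    rcases Nat.eq_zero_or_pos j0 with h0 | h0
    · simp [h0] at hj0; omega
    · omega
  have hkl : k ∣ l := hl ▸ Nat.dvd_lcm_left k m
  have key : ∀ a : ℤ, (h (2 * (k:ℤ) - 1 - (2*a - 1)) = 0 ∨
      h (2 * (k:ℤ) - 1 - (2*a - 1)) = 2 * (k:ℤ) - 1) ↔ (k:ℤ) ∣ a := by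
    intro a
    have he : 2 * (k:ℤ) - 1 - (2*a - 1) = 2*(k:ℤ) - 2*a := by ring
    rw [he, hh]
    exact fold_cond (k:ℤ) a hK
  constructor
  · refine ⟨by push_cast; omega, ⟨j0, hj0pos, by push_cast [hj0]; ring⟩, ?_⟩
    exact (key (l:ℤ)).mpr (by exact_mod_cast hkl)
  · rintro x ⟨hx0, ⟨j, hj1, hjx⟩, hcond⟩
    have hxe : x = 2 * ((j*m : ℕ) : ℤ) - 1 := by push_cast; linarith
    have hdvd : (k:ℤ) ∣ ((j*m : ℕ) : ℤ) := (key _).mp (hxe ▸ hcond)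
    have hdvd' : k ∣ j*m := by exact_mod_cast hdvd
    have hlcm : l ∣ j*m := hl ▸ Nat.lcm_dvd hdvd' (Dvd.intro_left j rfl)
    have : l ≤ j*m := Nat.le_of_dvd (by positivity) hlcm
    have : (l:ℤ) ≤ ((j*m : ℕ):ℤ) := by exact_mod_cast this
    omega
end

section
/- Let n = 2m-1 be odd with m ≥ 3. Define σ_s ∈ Sym{1,…,2m-1} as the permutation sending a odd to a+s if a+s ≤ 2m-1, else to 4m-1-a-s; and a even to a-s if a-s ≥ 1, else to 1+s-a (for 0 ≤ s ≤ 2m-2). Then σ_s is a well-defined bijection of {1,…,2m-1} for each such s. -/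
/-! Odd points travel `s` steps to the right and even points `s` steps to the left, each
bouncing off the end of `[1, n]` (at `n + 1/2`, resp. `1/2`). Two points travelling in the same
direction with the same number of bounces stay distinct; in every other case a collision would
either be a parity clash or force the sum `a + b` of the two points out of `[2, 2n]`. An injective
self-map of a finite set is bijective. -/

def bounceShift (n s a : ℤ) : ℤ :=
  if Odd a then (if a + s ≤ n then a + s else 2 * n + 1 - a - s)
  else (if 1 ≤ a - s then a - s else 1 + s - a)

section

variable {n s : ℤ}

theorem bounceShift_mapsTo (hs : 0 ≤ s) (hsn : s ≤ n) :
    Set.MapsTo (bounceShift n s) (Set.Icc 1 n) (Set.Icc 1 n) := by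
  intro a ⟨ha1, han⟩
  simp only [bounceShift, Int.odd_iff, Set.mem_Icc]
  split_ifs <;> omega

theorem bounceShift_injOn : Set.InjOn (bounceShift n s) (Set.Icc 1 n) := by
  intro a ⟨ha1, han⟩ b ⟨hb1, hbn⟩ hab
  simp only [bounceShift, Int.odd_iff] at hab
  split_ifs at hab <;> omega

theorem bounceShift_bijOn (hs : 0 ≤ s) (hsn : s ≤ n) :
    Set.BijOn (bounceShift n s) (Set.Icc 1 n) (Set.Icc 1 n) :=
  ((Set.finite_Icc 1 n).injOn_iff_bijOn_of_mapsTo (bounceShift_mapsTo hs hsn)).mp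
    bounceShift_injOn

end

theorem sigma_s_bijOn (m : ℕ) (hm : 3 ≤ m) (s : ℕ) (hs : s ≤ 2 * m - 2) (f : ℤ → ℤ)
    (hf : ∀ a : ℤ, f a =
      if Odd a then
        (if a + (s : ℤ) ≤ 2 * (m : ℤ) - 1 then a + (s : ℤ)
         else 4 * (m : ℤ) - 1 - a - (s : ℤ))
      else
        (if 1 ≤ a - (s : ℤ) then a - (s : ℤ) else 1 + (s : ℤ) - a)) :
    Set.BijOn f (Set.Icc 1 (2 * (m : ℤ) - 1)) (Set.Icc 1 (2 * (m : ℤ) - 1)) := by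
  have hf_eq : f = bounceShift (2 * m - 1) s := by
    funext a
    rw [hf, bounceShift, show (4 : ℤ) * m - 1 - a - s = 2 * (2 * m - 1) + 1 - a - s by ring]
  rw [hf_eq]
  exact bounceShift_bijOn (Int.natCast_nonneg s) (by omega)
end

section
/- Let W be the dihedral group of order 4m generated by r₀, r₁ acting on the root system Φ⁺ of A_{2m-1} via the embedding r₀ ↦ ∏_{i even} s_i, r₁ ↦ ∏_{i odd} s_i into W(A_{2m-1}), where negative roots are replaced by their negatives. Then the orbit of the set Y₀ = {α_{2t} : 1 ≤ t ≤ m-1} of simple roots with even index has exactly m elements. -/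
private def vmap (m : ℕ) (p : ZMod (2*m)) : ℕ :=
  if p.val = 0 then 1 else if p.val ≤ m then 2 * p.val else 4*m + 1 - 2*p.val

private def Bset (m : ℕ) (c : ZMod (2*m)) : Set (Sym2 ℕ) :=
  {q | ∃ i j : ZMod (2*m), i + j = c ∧ i ≠ j ∧ q = s(vmap m i, vmap m j)}

private theorem vmap_inj (m : ℕ) (hm : 3 ≤ m) : Function.Injective (vmap m) := by
  haveI : NeZero (2*m) := ⟨by omega⟩
  intro p q h
  have hp := ZMod.val_lt p
  have hq := ZMod.val_lt q
  have : p.val = q.val := by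
    unfold vmap at h
    split_ifs at h <;> omega
  exact ZMod.val_injective _ this

private theorem neg_val' (m : ℕ) (hm : 3 ≤ m) (p : ZMod (2*m)) :
    (-p).val = if p.val = 0 then 0 else 2*m - p.val := by
  haveI : NeZero (2*m) := ⟨by omega⟩
  rw [ZMod.neg_val]
  by_cases h : p = 0
  · simp [h]
  · rw [if_neg h, if_neg (by simpa [ZMod.val_eq_zero] using h)]

private theorem one_sub_val (m : ℕ) (hm : 3 ≤ m) (p : ZMod (2*m)) :
    (1 - p).val = if p.val = 0 then 1 else if p.val = 1 then 0 else 2*m + 1 - p.val := by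
  haveI : NeZero (2*m) := ⟨by omega⟩
  haveI : Fact (1 < 2*m) := ⟨by omega⟩
  have hp := ZMod.val_lt p
  have hcast : ((p.val : ℕ) : ZMod (2*m)) = p := ZMod.natCast_rightInverse p
  by_cases h0 : p.val = 0
  · have hz : p = 0 := (ZMod.val_eq_zero _).mp h0
    rw [if_pos h0, hz, sub_zero, ZMod.val_one]
  · rw [if_neg h0]
    by_cases h1 : p.val = 1
    · have hz : p = 1 := by rw [← hcast, h1]; norm_num
      rw [if_pos h1, hz, sub_self, ZMod.val_zero]
    · rw [if_neg h1]
      have hone : ((2*m + 1 : ℕ) : ZMod (2*m)) = 1 := by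
        rw [Nat.cast_add, ZMod.natCast_self, Nat.cast_one, zero_add]
      have key : 1 - p = ((2*m + 1 - p.val : ℕ) : ZMod (2*m)) := by
        rw [Nat.cast_sub (by omega), hone, hcast]
      rw [key, ZMod.val_cast_of_lt (by omega)]

private theorem r0_vmap (m : ℕ) (hm : 3 ≤ m) (r0 : Equiv.Perm ℕ)
    (hr0 : ∀ a : ℕ, r0 a =
      if Even a ∧ 2 ≤ a ∧ a ≤ 2 * m - 2 then a + 1
      else if Odd a ∧ 3 ≤ a ∧ a ≤ 2 * m - 1 then a - 1 else a)
    (p : ZMod (2*m)) : r0 (vmap m p) = vmap m (-p) := by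
  haveI : NeZero (2*m) := ⟨by omega⟩
  have hp : p.val < 2*m := ZMod.val_lt p
  have hneg := neg_val' m hm p
  rw [hr0]
  unfold vmap
  rw [hneg]
  simp only [Nat.even_iff, Nat.odd_iff]
  split_ifs <;> first | omega | exact absurd (by assumption) not_false

private theorem r1_vmap (m : ℕ) (hm : 3 ≤ m) (r1 : Equiv.Perm ℕ)
    (hr1 : ∀ a : ℕ, r1 a =
      if Odd a ∧ 1 ≤ a ∧ a ≤ 2 * m - 1 then a + 1
      else if Even a ∧ 2 ≤ a ∧ a ≤ 2 * m then a - 1 else a)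
    (p : ZMod (2*m)) : r1 (vmap m p) = vmap m (1 - p) := by
  haveI : NeZero (2*m) := ⟨by omega⟩
  have hp : p.val < 2*m := ZMod.val_lt p
  have hone := one_sub_val m hm p
  rw [hr1]
  unfold vmap
  rw [hone]
  simp only [Nat.even_iff, Nat.odd_iff]
  split_ifs <;> first | omega | exact absurd (by assumption) not_false

private theorem map_affine_Bset (m : ℕ) (f : Equiv.Perm ℕ) (a : ZMod (2*m))
    (hf : ∀ p : ZMod (2*m), f (vmap m p) = vmap m (a - p)) (c : ZMod (2*m)) :
    Sym2.map (⇑f) '' Bset m c = Bset m (2*a - c) := by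
  ext q
  constructor
  · rintro ⟨q', ⟨i, j, hij, hne, rfl⟩, rfl⟩
    refine ⟨a - i, a - j, by rw [← hij]; ring, fun h => hne (sub_right_injective h), ?_⟩
    rw [Sym2.map_pair_eq, hf, hf]
  · rintro ⟨i, j, hij, hne, rfl⟩
    refine ⟨s(vmap m (a - i), vmap m (a - j)),
      ⟨a - i, a - j, by linear_combination -hij, fun h => hne (sub_right_injective h), rfl⟩, ?_⟩
    rw [Sym2.map_pair_eq, hf, hf, sub_sub_cancel, sub_sub_cancel]

private theorem Bset_zero (m : ℕ) (hm : 3 ≤ m) :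
    Bset m 0 = {p | ∃ t : ℕ, 1 ≤ t ∧ t ≤ m - 1 ∧ p = s(2 * t, 2 * t + 1)} := by
  haveI : NeZero (2*m) := ⟨by omega⟩
  ext q
  constructor
  · rintro ⟨i, j, hij, hne, rfl⟩
    have hj : j = -i := by linear_combination hij
    subst hj
    have hi := ZMod.val_lt i
    have hnegv := neg_val' m hm i
    have hi0 : i.val ≠ 0 := by
      intro h
      exact hne (by rw [(ZMod.val_eq_zero _).mp h]; simp)
    have him : i.val ≠ m := by
      intro h
      apply hne
      apply (ZMod.val_injective _)
      rw [hnegv, if_neg hi0, h]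
      omega
    rw [if_neg hi0] at hnegv
    by_cases hle : i.val ≤ m
    · refine ⟨i.val, by omega, by omega, ?_⟩
      unfold vmap
      rw [hnegv, if_neg hi0, if_pos hle, if_neg (by omega), if_neg (by omega),
        show 4*m + 1 - 2*(2*m - i.val) = 2*i.val + 1 from by omega]
    · refine ⟨2*m - i.val, by omega, by omega, ?_⟩
      unfold vmap
      rw [hnegv, if_neg hi0, if_neg hle, if_neg (by omega), if_pos (by omega),
        show 4*m + 1 - 2*i.val = 2*(2*m - i.val) + 1 from by omega, Sym2.eq_swap]
  · rintro ⟨t, ht1, ht2, rfl⟩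
    refine ⟨((t : ℕ) : ZMod (2*m)), ((2*m - t : ℕ) : ZMod (2*m)), ?_, ?_, ?_⟩
    · rw [← Nat.cast_add, show t + (2*m - t) = 2*m by omega, ZMod.natCast_self]
    · intro h
      have h1 : ((t : ℕ) : ZMod (2*m)).val = t := ZMod.val_cast_of_lt (by omega)
      have h2 : ((2*m - t : ℕ) : ZMod (2*m)).val = 2*m - t := ZMod.val_cast_of_lt (by omega)
      rw [h] at h1
      omega
    · have h1 : ((t : ℕ) : ZMod (2*m)).val = t := ZMod.val_cast_of_lt (by omega)
      have h2 : ((2*m - t : ℕ) : ZMod (2*m)).val = 2*m - t := ZMod.val_cast_of_lt (by omega)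
      unfold vmap
      rw [h1, h2, if_neg (by omega), if_pos (by omega), if_neg (by omega), if_neg (by omega),
        show 4*m + 1 - 2*(2*m - t) = 2*t + 1 from by omega]

private theorem Bset_nonempty (m : ℕ) (hm : 3 ≤ m) (c : ZMod (2*m)) : (Bset m c).Nonempty := by
  haveI : NeZero (2*m) := ⟨by omega⟩
  have : ∃ e : ZMod (2*m), 2*e ≠ c := by
    by_contra h
    push_neg at h
    have h0 := h 0
    have h1 := h 1
    rw [mul_one] at h1
    rw [mul_zero] at h0
    rw [← h0] at h1
    have h3 : (2 : ZMod (2*m)) = ((2:ℕ) : ZMod (2*m)) := by norm_cast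
    have := congrArg ZMod.val h1
    rw [h3, ZMod.val_cast_of_lt (by omega), ZMod.val_zero] at this
    omega
  obtain ⟨e, he⟩ := this
  exact ⟨s(vmap m e, vmap m (c - e)), e, c - e, by ring, fun h => he (by linear_combination h), rfl⟩

private theorem cast_two_mod (m : ℕ) (j : ℕ) :
    ((2 * (j % m) : ℕ) : ZMod (2*m)) = ((2*j : ℕ) : ZMod (2*m)) := by
  have h : 2*j = 2*(j % m) + 2*(m*(j / m)) := by
    have := Nat.mod_add_div j m
    omega
  rw [h, Nat.cast_add]
  have h2 : ((2*(m*(j/m)) : ℕ) : ZMod (2*m)) = 0 := by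
    have h3 : (2*(m*(j/m)) : ℕ) = (2*m)*(j/m) := by ring
    rw [h3, Nat.cast_mul, ZMod.natCast_self, zero_mul]
  rw [h2, add_zero]

private theorem Bset_inj (m : ℕ) (hm : 3 ≤ m) (k k' : ℕ) (hk : k < m) (hk' : k' < m)
    (h : Bset m ((2*k : ℕ) : ZMod (2*m)) = Bset m ((2*k' : ℕ) : ZMod (2*m))) : k = k' := by
  haveI : NeZero (2*m) := ⟨by omega⟩
  obtain ⟨q, hq⟩ := Bset_nonempty m hm ((2*k : ℕ) : ZMod (2*m))
  have hq' : q ∈ Bset m ((2*k' : ℕ) : ZMod (2*m)) := h ▸ hq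
  obtain ⟨i, j, hij, -, rfl⟩ := hq
  obtain ⟨i', j', hij', -, hq2⟩ := hq'
  have hvinj := vmap_inj m hm
  have hsum : i + j = i' + j' := by
    rw [Sym2.eq_iff] at hq2
    rcases hq2 with ⟨h1, h2⟩ | ⟨h1, h2⟩ <;>
      rw [hvinj h1, hvinj h2] <;> ring
  rw [hij, hij'] at hsum
  have := congrArg ZMod.val hsum
  rw [ZMod.val_cast_of_lt (by omega), ZMod.val_cast_of_lt (by omega)] at this
  omega

theorem orbit_Y0_card_even_case (m : ℕ) (hm : 3 ≤ m) (r0 r1 : Equiv.Perm ℕ)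
    (hr0 : ∀ a : ℕ, r0 a =
      if Even a ∧ 2 ≤ a ∧ a ≤ 2 * m - 2 then a + 1
      else if Odd a ∧ 3 ≤ a ∧ a ≤ 2 * m - 1 then a - 1 else a)
    (hr1 : ∀ a : ℕ, r1 a =
      if Odd a ∧ 1 ≤ a ∧ a ≤ 2 * m - 1 then a + 1
      else if Even a ∧ 2 ≤ a ∧ a ≤ 2 * m then a - 1 else a)
    (Y0 : Set (Sym2 ℕ))
    (hY0 : Y0 = {p | ∃ t : ℕ, 1 ≤ t ∧ t ≤ m - 1 ∧ p = s(2 * t, 2 * t + 1)}) :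
    {B : Set (Sym2 ℕ) |
        ∃ w ∈ Subgroup.closure ({r0, r1} : Set (Equiv.Perm ℕ)),
          B = Sym2.map ⇑w '' Y0}.ncard = m := by
  haveI : NeZero (2*m) := ⟨by omega⟩
  -- r0 and r1 are involutions
  have hinv0 : r0⁻¹ = r0 := by
    apply inv_eq_of_mul_eq_one_right
    ext a
    simp only [Equiv.Perm.mul_apply, Equiv.Perm.one_apply]
    rw [hr0 a, hr0]
    simp only [Nat.even_iff, Nat.odd_iff]
    split_ifs <;> omega
  have hinv1 : r1⁻¹ = r1 := by
    apply inv_eq_of_mul_eq_one_right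
    ext a
    simp only [Equiv.Perm.mul_apply, Equiv.Perm.one_apply]
    rw [hr1 a, hr1]
    simp only [Nat.even_iff, Nat.odd_iff]
    split_ifs <;> omega
  -- reduce subgroup closure to submonoid closure
  have hclosure : ∀ w ∈ Subgroup.closure ({r0, r1} : Set (Equiv.Perm ℕ)),
      w ∈ Submonoid.closure ({r0, r1} : Set (Equiv.Perm ℕ)) := by
    intro w hw
    have h1 : w ∈ (Subgroup.closure ({r0, r1} : Set (Equiv.Perm ℕ))).toSubmonoid := hw
    rw [Subgroup.closure_toSubmonoid] at h1
    rwa [Set.inv_insert, Set.inv_singleton, hinv0, hinv1, Set.union_self] at h1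
  -- action of r0 and r1 on the sets Bset
  have h0B : ∀ c : ZMod (2*m), Sym2.map ⇑r0 '' Bset m c = Bset m (-c) := by
    intro c
    have := map_affine_Bset m r0 0 (fun p => by
      rw [zero_sub]; exact r0_vmap m hm r0 hr0 p) c
    rwa [mul_zero, zero_sub] at this
  have h1B : ∀ c : ZMod (2*m), Sym2.map ⇑r1 '' Bset m c = Bset m (2 - c) := by
    intro c
    have := map_affine_Bset m r1 1 (fun p => r1_vmap m hm r1 hr1 p) c
    rwa [mul_one] at this
  have hY0B : Y0 = Bset m 0 := by rw [hY0, Bset_zero m hm]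
  -- the candidate orbit
  set T : Set (Set (Sym2 ℕ)) :=
      (fun k : ℕ => Bset m ((2*k : ℕ) : ZMod (2*m))) '' (Set.Iio m) with hT
  -- T is closed under the action of elements of the submonoid closure
  have hTmem : ∀ k : ℕ, k < m → Bset m ((2*k : ℕ) : ZMod (2*m)) ∈ T := by
    intro k hk
    exact ⟨k, hk, rfl⟩
  have hTclosed : ∀ w ∈ Submonoid.closure ({r0, r1} : Set (Equiv.Perm ℕ)),
      ∀ B ∈ T, Sym2.map ⇑w '' B ∈ T := by
    intro w hw
    induction hw using Submonoid.closure_induction with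
    | mem x hx =>
      intro B hB
      obtain ⟨k, hk0, rfl⟩ := hB
      have hk : k < m := hk0
      simp only [Set.mem_insert_iff, Set.mem_singleton_iff] at hx
      rcases hx with rfl | rfl
      · rw [h0B]
        have hidx : ((2*((m-k) % m) : ℕ) : ZMod (2*m)) = -((2*k : ℕ) : ZMod (2*m)) := by
          rw [cast_two_mod, show (2*(m-k) : ℕ) = 2*m - 2*k from by omega,
            Nat.cast_sub (by omega), ZMod.natCast_self, zero_sub]
        rw [← hidx]
        exact hTmem _ (Nat.mod_lt _ (by omega))
      · rw [h1B]
        have hidx : ((2*((m+1-k) % m) : ℕ) : ZMod (2*m)) = 2 - ((2*k : ℕ) : ZMod (2*m)) := by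
          rw [cast_two_mod, show (2*(m+1-k) : ℕ) = 2*m + 2 - 2*k from by omega,
            Nat.cast_sub (by omega), Nat.cast_add, ZMod.natCast_self, zero_add]
          norm_num
        rw [← hidx]
        exact hTmem _ (Nat.mod_lt _ (by omega))
    | one =>
      intro B hB
      simpa using hB
    | mul x y hx hy ihx ihy =>
      intro B hB
      have : Sym2.map ⇑(x*y) '' B = Sym2.map ⇑x '' (Sym2.map ⇑y '' B) := by
        rw [← Set.image_comp, ← Sym2.map_comp, Equiv.Perm.coe_mul]
      rw [this]
      exact ihx _ (ihy B hB)
  -- every Bset (2k) is in the orbit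
  have hTS : ∀ k : ℕ, ∃ w ∈ Subgroup.closure ({r0, r1} : Set (Equiv.Perm ℕ)),
      Sym2.map ⇑w '' Y0 = Bset m ((2*k : ℕ) : ZMod (2*m)) := by
    intro k
    induction k with
    | zero =>
      refine ⟨1, one_mem _, ?_⟩
      rw [hY0B]
      simp
    | succ k ih =>
      obtain ⟨w, hwmem, hw⟩ := ih
      have h0mem : r0 ∈ Subgroup.closure ({r0, r1} : Set (Equiv.Perm ℕ)) :=
        Subgroup.subset_closure (by simp)
      have h1mem : r1 ∈ Subgroup.closure ({r0, r1} : Set (Equiv.Perm ℕ)) :=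
        Subgroup.subset_closure (by simp)
      refine ⟨r1 * (r0 * w), mul_mem h1mem (mul_mem h0mem hwmem), ?_⟩
      have e1 : Sym2.map ⇑(r1 * (r0 * w)) '' Y0
          = Sym2.map ⇑r1 '' (Sym2.map ⇑r0 '' (Sym2.map ⇑w '' Y0)) := by
        rw [← Set.image_comp, ← Set.image_comp, ← Sym2.map_comp, ← Sym2.map_comp,
          Equiv.Perm.coe_mul, Equiv.Perm.coe_mul]
        rfl
      rw [e1, hw, h0B, h1B]
      congr 1
      push_cast
      ring
  -- the orbit equals T
  have hset : {B : Set (Sym2 ℕ) |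
      ∃ w ∈ Subgroup.closure ({r0, r1} : Set (Equiv.Perm ℕ)),
        B = Sym2.map ⇑w '' Y0} = T := by
    ext B
    constructor
    · rintro ⟨w, hw, rfl⟩
      have hY0T : Y0 ∈ T := by
        rw [hY0B]
        have : ((2*0 : ℕ) : ZMod (2*m)) = 0 := by norm_num
        rw [← this]
        exact hTmem 0 (by omega)
      exact hTclosed w (hclosure w hw) Y0 hY0T
    · rintro ⟨k, hk, rfl⟩
      obtain ⟨w, hwmem, hw⟩ := hTS k
      exact ⟨w, hwmem, hw.symm⟩
  rw [hset, hT]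
  have hinj : Set.InjOn (fun k : ℕ => Bset m ((2*k : ℕ) : ZMod (2*m))) (Set.Iio m) :=
    fun k hk k' hk' h => Bset_inj m hm k k' hk hk' h
  rw [Set.ncard_image_of_injOn hinj, ← Finset.coe_range, Set.ncard_coe_finset,
    Finset.card_range]
end

section
/- With the same setup (W(I₂^{2m}) embedded in Sym(2m) acting on admissible subsets of positive roots of A_{2m-1}), for Y₀ = {α_{2t} : 1 ≤ t ≤ m-1}, r₀ fixes Y₀ and the alternating word [r₁r₀⋯]_{2m-1} of length 2m-1 fixes Y₀ under the negating action. -/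
theorem stabilizer_Y0_contains (m : ℕ) (hm : 3 ≤ m) (r0 r1 : Equiv.Perm ℕ)
    (hr0 : ∀ a : ℕ, r0 a =
      if Even a ∧ 2 ≤ a ∧ a ≤ 2 * m - 2 then a + 1
      else if Odd a ∧ 3 ≤ a ∧ a ≤ 2 * m - 1 then a - 1 else a)
    (hr1 : ∀ a : ℕ, r1 a =
      if Odd a ∧ 1 ≤ a ∧ a ≤ 2 * m - 1 then a + 1
      else if Even a ∧ 2 ≤ a ∧ a ≤ 2 * m then a - 1 else a)
    (Y0 : Set (Sym2 ℕ))
    (hY0 : Y0 = {p | ∃ t : ℕ, 1 ≤ t ∧ t ≤ m - 1 ∧ p = s(2 * t, 2 * t + 1)}) :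
    Sym2.map ⇑r0 '' Y0 = Y0 ∧
      Sym2.map ⇑((r1 * r0) ^ (m - 1) * r1) '' Y0 = Y0 := by
  subst hY0
  -- pointwise values of r0
  have h0e : ∀ t, 1 ≤ t → t ≤ m - 1 → r0 (2 * t) = 2 * t + 1 := by
    intro t h1 h2
    rw [hr0]
    simp only [Nat.even_iff, Nat.odd_iff, true_and, false_and, and_true, and_false]
    split_ifs <;> omega
  have h0o : ∀ t, 1 ≤ t → t ≤ m - 1 → r0 (2 * t + 1) = 2 * t := by
    intro t h1 h2
    rw [hr0]
    simp only [Nat.even_iff, Nat.odd_iff, true_and, false_and, and_true, and_false]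
    split_ifs <;> omega
  -- pointwise values of r1
  have h1e : ∀ t, 1 ≤ t → t ≤ m → r1 (2 * t) = 2 * (t - 1) + 1 := by
    intro t h1 h2
    rw [hr1]
    simp only [Nat.even_iff, Nat.odd_iff, true_and, false_and, and_true, and_false]
    split_ifs <;> omega
  have h1o : ∀ t, 1 ≤ t → t ≤ m - 1 → r1 (2 * t + 1) = 2 * (t + 1) := by
    intro t h1 h2
    rw [hr1]
    simp only [Nat.even_iff, Nat.odd_iff, true_and, false_and, and_true, and_false]
    split_ifs <;> omega
  have h1one : r1 1 = 2 := by
    rw [hr1]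
    simp only [Nat.even_iff, Nat.odd_iff, true_and, false_and, and_true, and_false]
    split_ifs <;> omega
  have h0one : r0 1 = 1 := by
    rw [hr0]
    simp only [Nat.even_iff, Nat.odd_iff, true_and, false_and, and_true, and_false]
    split_ifs <;> omega
  -- pointwise values of c = r1 * r0
  have hc1 : (r1 * r0) 1 = 2 := by
    rw [Equiv.Perm.mul_apply, h0one, h1one]
  have hce : ∀ k, 1 ≤ k → k ≤ m - 1 → (r1 * r0) (2 * k) = 2 * (k + 1) := by
    intro k h1 h2
    rw [Equiv.Perm.mul_apply, h0e k h1 h2, h1o k h1 h2]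
  have hco : ∀ t, t ≤ m - 2 → (r1 * r0) (2 * t + 3) = 2 * t + 1 := by
    intro t ht
    have e1 : r0 (2 * t + 3) = 2 * (t + 1) := by
      have := h0o (t + 1) (by omega) (by omega)
      convert this using 2 <;> omega
    rw [Equiv.Perm.mul_apply, e1, h1e (t + 1) (by omega) (by omega)]
    omega
  have hc2m : (r1 * r0) (2 * m) = 2 * (m - 1) + 1 := by
    have e1 : r0 (2 * m) = 2 * m := by
      rw [hr0]
      simp only [Nat.even_iff, Nat.odd_iff, true_and, false_and, and_true, and_false]
      split_ifs <;> omega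
    rw [Equiv.Perm.mul_apply, e1, h1e m (by omega) le_rfl]
  -- L1 : c^k 2 = 2*(k+1) for k ≤ m-1
  have L1 : ∀ k, k ≤ m - 1 → ((r1 * r0) ^ k) 2 = 2 * (k + 1) := by
    intro k
    induction k with
    | zero => intro _; simp
    | succ n ih =>
      intro h
      rw [pow_succ', Equiv.Perm.mul_apply, ih (by omega)]
      exact hce (n + 1) (by omega) h
  -- L2 : c^t (2t+1) = 1 for t ≤ m-1
  have L2 : ∀ t, t ≤ m - 1 → ((r1 * r0) ^ t) (2 * t + 1) = 1 := by
    intro t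
    induction t with
    | zero => intro _; simp
    | succ n ih =>
      intro h
      rw [pow_succ, Equiv.Perm.mul_apply]
      have e : (r1 * r0) (2 * (n + 1) + 1) = 2 * n + 1 := by
        have := hco n (by omega)
        convert this using 2 <;> omega
      rw [e, ih (by omega)]
  -- L3 : c^j (2*(m-j)) = 2*m for j ≤ m-1
  have L3 : ∀ j, j ≤ m - 1 → ((r1 * r0) ^ j) (2 * (m - j)) = 2 * m := by
    intro j
    induction j with
    | zero => intro _; simp
    | succ n ih =>
      intro h
      rw [pow_succ, Equiv.Perm.mul_apply]
      have e : (r1 * r0) (2 * (m - (n + 1))) = 2 * (m - n) := by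
        have := hce (m - (n + 1)) (by omega) (by omega)
        rw [this]
        omega
      rw [e, ih (by omega)]
  -- L4 : c^k (2*m) = 2*(m-k)+1 for 1 ≤ k ≤ m-1
  have L4 : ∀ k, 1 ≤ k → k ≤ m - 1 → ((r1 * r0) ^ k) (2 * m) = 2 * (m - k) + 1 := by
    intro k
    induction k with
    | zero => omega
    | succ n ih =>
      intro _ h
      rcases Nat.eq_zero_or_pos n with hn | hn
      · subst hn
        simpa using hc2m
      · rw [pow_succ', Equiv.Perm.mul_apply, ih hn (by omega)]
        have e : (r1 * r0) (2 * (m - n) + 1) = 2 * (m - (n + 1)) + 1 := by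
          have := hco (m - n - 1) (by omega)
          convert this using 2 <;> omega
        exact e
  set w : Equiv.Perm ℕ := (r1 * r0) ^ (m - 1) * r1 with hw
  -- w (2t) = 2(m-t)
  have hwe : ∀ t, 1 ≤ t → t ≤ m - 1 → w (2 * t) = 2 * (m - t) := by
    intro t h1 h2
    rw [hw, Equiv.Perm.mul_apply, h1e t h1 (by omega)]
    have hsplit : (m - 1) = (m - t) + (t - 1) := by omega
    rw [hsplit, pow_add, Equiv.Perm.mul_apply]
    have e2 : ((r1 * r0) ^ (t - 1)) (2 * (t - 1) + 1) = 1 := L2 (t - 1) (by omega)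
    rw [e2]
    have hsplit2 : (m - t) = (m - t - 1) + 1 := by omega
    rw [hsplit2, pow_succ, Equiv.Perm.mul_apply, hc1]
    have := L1 (m - t - 1) (by omega)
    rw [this]
  -- w (2t+1) = 2(m-t)+1
  have hwo : ∀ t, 1 ≤ t → t ≤ m - 1 → w (2 * t + 1) = 2 * (m - t) + 1 := by
    intro t h1 h2
    rw [hw, Equiv.Perm.mul_apply, h1o t h1 h2]
    have hsplit : (m - 1) = t + (m - 1 - t) := by omega
    rw [hsplit, pow_add, Equiv.Perm.mul_apply]
    have e1 : ((r1 * r0) ^ (m - 1 - t)) (2 * (t + 1)) = 2 * m := by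
      have := L3 (m - 1 - t) (by omega)
      have e : m - (m - 1 - t) = t + 1 := by omega
      rwa [e] at this
    rw [e1]
    exact L4 t h1 h2
  constructor
  · ext p
    simp only [Set.mem_image, Set.mem_setOf_eq]
    constructor
    · rintro ⟨q, ⟨t, ht1, ht2, rfl⟩, rfl⟩
      exact ⟨t, ht1, ht2, by
        rw [Sym2.map_pair_eq, h0e t ht1 ht2, h0o t ht1 ht2, Sym2.eq_swap]⟩
    · rintro ⟨t, ht1, ht2, rfl⟩
      refine ⟨s(2 * t, 2 * t + 1), ⟨t, ht1, ht2, rfl⟩, ?_⟩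
      rw [Sym2.map_pair_eq, h0e t ht1 ht2, h0o t ht1 ht2, Sym2.eq_swap]
  · ext p
    simp only [Set.mem_image, Set.mem_setOf_eq]
    constructor
    · rintro ⟨q, ⟨t, ht1, ht2, rfl⟩, rfl⟩
      refine ⟨m - t, by omega, by omega, ?_⟩
      rw [Sym2.map_pair_eq, hwe t ht1 ht2, hwo t ht1 ht2]
    · rintro ⟨t, ht1, ht2, rfl⟩
      refine ⟨s(2 * (m - t), 2 * (m - t) + 1), ⟨m - t, by omega, by omega, rfl⟩, ?_⟩
      rw [Sym2.map_pair_eq, hwe (m - t) (by omega) (by omega),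
        hwo (m - t) (by omega) (by omega)]
      have e : m - (m - t) = t := by omega
      rw [e]
end

section
/- Let n = 2m-1 be odd, m ≥ 3, and embed the dihedral group W of order 2n into Sym(n) by r₀ ↦ ∏_{i even, 0<i<n}(i,i+1), r₁ ↦ ∏_{i odd, 0<i<n}(i,i+1). Acting on sets of positive roots of A_{n-1} (negating negative roots), the orbit of Y₀ = {α_{2t} : 1 ≤ t ≤ m-1} has exactly 2m-1 = n elements, and the stabilizer of Y₀ is ⟨r₀⟩. -/
/-!
Number the points 1, 3, 5, …, 2m-1, 2m-2, …, 4, 2 cyclically by `ZMod n`. Then r0 and r1 act as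
the reflections j ↦ -j and j ↦ -1-j, so every element of W acts as some j ↦ ±j + k and fixes all
points outside {1, …, n}, while Y0 becomes the set of pairs {t, -t} with t ≠ 0. Such an element
sends Y0 to the set of pairs {k + t, k - t}. Since 2 is invertible mod n these n sets are distinct,
and the powers of the rotation r0 r1 : j ↦ j + 1 reach all of them. So the orbit has n elements,
and the stabilizer consists of the elements with k = 0, which are 1 and r0.
-/

open Equiv MulAction Set
open scoped Pointwise

namespace Sym2

variable {G α : Type*} [Monoid G] [MulAction G α]

instance : MulAction G (Sym2 α) where
  smul g := Sym2.map (g • ·)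
  one_smul p := by
    change Sym2.map (fun a => (1 : G) • a) p = p
    simp only [one_smul, Sym2.map_id', id_eq]
  mul_smul g h p := by
    change Sym2.map (fun a => (g * h) • a) p = Sym2.map (g • ·) (Sym2.map (h • ·) p)
    simp only [Sym2.map_map, Function.comp_def, mul_smul]

lemma image_map_perm_eq_smul (w : Perm α) (s : Set (Sym2 α)) : Sym2.map w '' s = w • s :=
  rfl

end Sym2

lemma eq_of_mem_fixingSubgroup_compl_range {R α : Type*} {f : R → α} {v w : Perm α}
    (hv : v ∈ fixingSubgroup (Perm α) (range f)ᶜ)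
    (hw : w ∈ fixingSubgroup (Perm α) (range f)ᶜ)
    (h : ∀ j, v (f j) = w (f j)) : v = w := by
  ext a
  by_cases ha : a ∈ range f
  · obtain ⟨j, rfl⟩ := ha
    exact h j
  · rw [mem_fixingSubgroup_iff] at hv hw
    exact (hv a ha).trans (hw a ha).symm

section Dihedral

variable {R α : Type*} [AddCommGroup R]

def mirrorPairs (c : R) : Set (Sym2 R) := {p | ∃ t ≠ 0, p = s(c + t, c - t)}

lemma map_image_mirrorPairs (ε : ℤˣ) (k c : R) :
    Sym2.map (fun j => ε • j + k) '' mirrorPairs c = mirrorPairs (ε • c + k) := by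
  have hpair : ∀ t, Sym2.map (fun j => ε • j + k) s(c + t, c - t) =
      s(ε • c + k + ε • t, ε • c + k - ε • t) := fun t => by
    rw [Sym2.map_mk, smul_add, smul_sub]; congr 1 <;> abel
  ext p
  constructor
  · rintro ⟨_, ⟨t, ht, rfl⟩, rfl⟩
    exact ⟨ε • t, (smul_ne_zero_iff_ne ε).mpr ht, hpair t⟩
  · rintro ⟨t, ht, rfl⟩
    refine ⟨s(c + ε⁻¹ • t, c - ε⁻¹ • t), ⟨ε⁻¹ • t, (smul_ne_zero_iff_ne _).mpr ht, rfl⟩,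
      ?_⟩
    rw [hpair, smul_inv_smul]

lemma mirrorPairs_injective (h2 : Function.Injective fun x : R => 2 • x) :
    Function.Injective (mirrorPairs : R → Set (Sym2 R)) := by
  cases subsingleton_or_nontrivial R
  · exact Function.injective_of_subsingleton _
  intro a b hab
  obtain ⟨t, ht⟩ := exists_ne (0 : R)
  obtain ⟨t', -, hp⟩ : s(a + t, a - t) ∈ mirrorPairs b := hab ▸ ⟨t, ht, rfl⟩
  -- the two ends of a pair about `c` sum to `2 • c`
  have hsum : (a + t) + (a - t) = (b + t') + (b - t') := by
    rcases Sym2.eq_iff.mp hp with ⟨h1, h2⟩ | ⟨h1, h2⟩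
    · rw [h1, h2]
    · rw [h1, h2, add_comm]
  refine h2 ?_
  calc 2 • a = (a + t) + (a - t) := by abel
    _ = (b + t') + (b - t') := hsum
    _ = 2 • b := by abel

def dihedralAlong (f : R → α) : Subgroup (Perm α) where
  carrier := {w | ∃ (ε : ℤˣ) (k : R), ∀ j, w (f j) = f (ε • j + k)}
  one_mem' := ⟨1, 0, fun j => by simp⟩
  mul_mem' := by
    rintro v w ⟨ε, k, hv⟩ ⟨δ, l, hw⟩
    refine ⟨ε * δ, ε • l + k, fun j => ?_⟩
    rw [Perm.mul_apply, hw, hv, smul_add, mul_smul, add_assoc]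
  inv_mem' := by
    rintro w ⟨ε, k, hw⟩
    refine ⟨ε⁻¹, -(ε⁻¹ • k), fun j => Perm.inv_eq_iff_eq.mpr ?_⟩
    rw [hw, smul_add, smul_neg, smul_inv_smul, smul_inv_smul, neg_add_cancel_right]

lemma smul_image_map_mirrorPairs {f : R → α} {w : Perm α} {ε : ℤˣ} {k : R}
    (hw : ∀ j, w (f j) = f (ε • j + k)) (c : R) :
    w • (Sym2.map f '' mirrorPairs c) = Sym2.map f '' mirrorPairs (ε • c + k) := by
  have hcomm : ⇑w ∘ f = f ∘ fun j => ε • j + k := funext hw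
  rw [← map_image_mirrorPairs, ← Sym2.image_map_perm_eq_smul, image_image, image_image]
  simp only [Sym2.map_map, hcomm]

lemma pow_apply_of_apply_eq_add {f : R → α} {ρ : Perm α} {k : R}
    (hρ : ∀ j, ρ (f j) = f (j + k)) (s : ℕ) (j : R) : (ρ ^ s) (f j) = f (j + s • k) := by
  induction s generalizing j with
  | zero => simp
  | succ s ih => rw [pow_succ, Perm.mul_apply, hρ, ih, succ_nsmul, add_assoc, add_comm k]

end Dihedral

lemma ZMod.two_nsmul_injective {n : ℕ} (hn : Odd n) :
    Function.Injective fun x : ZMod n => 2 • x := by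
  have h2 : IsUnit (2 : ZMod n) := by
    exact_mod_cast (ZMod.isUnit_iff_coprime 2 n).mpr (Nat.coprime_two_left.mpr hn)
  intro a b hab
  simp only [nsmul_eq_mul, Nat.cast_ofNat] at hab
  exact h2.mul_left_cancel hab

section Polygon

variable {α : Type*} {n : ℕ}

lemma setOf_smul_eq_range_mirrorPairs [NeZero n] {f : ZMod n → α} {H : Subgroup (Perm α)}
    (hH : H ≤ dihedralAlong f) {ρ : Perm α} (hρH : ρ ∈ H) (hρ : ∀ j, ρ (f j) = f (j + 1)) :
    {B | ∃ w ∈ H, B = w • Sym2.map f '' mirrorPairs 0} =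
      range fun c => Sym2.map f '' mirrorPairs c := by
  ext B
  constructor
  · rintro ⟨w, hw, rfl⟩
    obtain ⟨ε, k, hwf⟩ := hH hw
    exact ⟨k, by rw [smul_image_map_mirrorPairs hwf, smul_zero, zero_add]⟩
  · rintro ⟨c, rfl⟩
    refine ⟨ρ ^ c.val, pow_mem hρH _, ?_⟩
    have hρc : ∀ j, (ρ ^ c.val) (f j) = f ((1 : ℤˣ) • j + c) := fun j => by
      rw [pow_apply_of_apply_eq_add hρ, nsmul_one, ZMod.natCast_zmod_val, one_smul]
    rw [smul_image_map_mirrorPairs hρc, smul_zero, zero_add]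

lemma image_mirrorPairs_injective (hn : Odd n) {f : ZMod n → α} (hf : Function.Injective f) :
    Function.Injective fun c : ZMod n => Sym2.map f '' mirrorPairs c :=
  (Set.image_injective.mpr (Sym2.map.injective hf)).comp
    (mirrorPairs_injective (ZMod.two_nsmul_injective hn))

lemma eq_one_or_eq_of_smul_image_mirrorPairs (hn : Odd n) {f : ZMod n → α}
    (hf : Function.Injective f) {w σ : Perm α}
    (hw : w ∈ dihedralAlong f ⊓ fixingSubgroup (Perm α) (range f)ᶜ)
    (hσ : σ ∈ fixingSubgroup (Perm α) (range f)ᶜ) (hσf : ∀ j, σ (f j) = f (-j))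
    (hY : w • (Sym2.map f '' mirrorPairs 0) = Sym2.map f '' mirrorPairs 0) :
    w = 1 ∨ w = σ := by
  obtain ⟨⟨ε, k, hwf⟩, hwF⟩ := hw
  have hk : k = 0 := by
    rw [smul_image_map_mirrorPairs hwf, smul_zero, zero_add] at hY
    exact image_mirrorPairs_injective hn hf hY
  rcases Int.units_eq_one_or ε with rfl | rfl
  · exact .inl <| eq_of_mem_fixingSubgroup_compl_range hwF (one_mem _) fun j => by
      simp [hwf, hk]
  · exact .inr <| eq_of_mem_fixingSubgroup_compl_range hwF hσ fun j => by
      simp [hwf, hσf, hk]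

end Polygon

def cyclicLabel (m : ℕ) (k : ZMod (2 * m - 1)) : ℕ :=
  if k.val < m then 2 * k.val + 1 else 2 * (2 * m - 1 - k.val)

def evenSwaps (m a : ℕ) : ℕ :=
  if Even a ∧ 2 ≤ a ∧ a ≤ 2 * m - 2 then a + 1
  else if Odd a ∧ 3 ≤ a ∧ a ≤ 2 * m - 1 then a - 1 else a

def oddSwaps (m a : ℕ) : ℕ :=
  if Odd a ∧ 1 ≤ a ∧ a ≤ 2 * m - 3 then a + 1
  else if Even a ∧ 2 ≤ a ∧ a ≤ 2 * m - 2 then a - 1 else a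

section CyclicLabel

variable {m : ℕ}

lemma evenSwaps_of_notMem_Icc {a : ℕ} (ha : a ∉ Icc 1 (2 * m - 1)) : evenSwaps m a = a := by
  rw [mem_Icc] at ha
  unfold evenSwaps
  split_ifs <;> omega

lemma oddSwaps_of_notMem_Icc {a : ℕ} (ha : a ∉ Icc 1 (2 * m - 1)) : oddSwaps m a = a := by
  rw [mem_Icc] at ha
  unfold oddSwaps
  split_ifs <;> omega

lemma cyclicLabel_natCast {v : ℕ} (hv : v < m) :
    cyclicLabel m v = 2 * v + 1 := by
  unfold cyclicLabel
  rw [ZMod.val_natCast_of_lt (by omega), if_pos hv]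

variable [NeZero (2 * m - 1)]

lemma cyclicLabel_injective : Function.Injective (cyclicLabel m) := by
  intro a b h
  have ha := ZMod.val_lt a
  have hb := ZMod.val_lt b
  refine ZMod.val_injective _ ?_
  unfold cyclicLabel at h
  split_ifs at h <;> omega

lemma range_cyclicLabel : range (cyclicLabel m) = Icc 1 (2 * m - 1) := by
  ext a
  simp only [mem_range, mem_Icc]
  constructor
  · rintro ⟨k, rfl⟩
    have hk := ZMod.val_lt k
    unfold cyclicLabel
    split_ifs <;> omega
  · rintro ⟨h1, h2⟩
    rcases Nat.even_or_odd' a with ⟨v, rfl | rfl⟩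
    · refine ⟨((2 * m - 1 - v : ℕ) : ZMod (2 * m - 1)), ?_⟩
      unfold cyclicLabel
      rw [ZMod.val_natCast_of_lt (by omega)]
      split_ifs <;> omega
    · refine ⟨(v : ZMod (2 * m - 1)), ?_⟩
      unfold cyclicLabel
      rw [ZMod.val_natCast_of_lt (by omega)]
      split_ifs <;> omega

lemma cyclicLabel_neg_natCast {v : ℕ} (hv0 : 0 < v) (hv : v < m) :
    cyclicLabel m (-v) = 2 * v := by
  have hv' : (v : ZMod (2 * m - 1)).val = v := ZMod.val_natCast_of_lt (by omega)
  have hne : (v : ZMod (2 * m - 1)) ≠ 0 := by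
    rw [← ZMod.val_ne_zero, hv']
    omega
  unfold cyclicLabel
  rw [ZMod.neg_val, if_neg hne, hv']
  split_ifs <;> omega

lemma evenSwaps_cyclicLabel (k : ZMod (2 * m - 1)) :
    evenSwaps m (cyclicLabel m k) = cyclicLabel m (-k) := by
  have hk := ZMod.val_lt k
  unfold evenSwaps cyclicLabel
  rw [ZMod.neg_val]
  simp only [Nat.even_iff, Nat.odd_iff]
  rcases eq_or_ne k 0 with rfl | hk0
  · rw [if_pos rfl, ZMod.val_zero]
    split_ifs <;> omega
  · have := (ZMod.val_ne_zero k).mpr hk0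
    rw [if_neg hk0]
    split_ifs <;> omega

lemma oddSwaps_cyclicLabel (k : ZMod (2 * m - 1)) :
    oddSwaps m (cyclicLabel m k) = cyclicLabel m (-k - 1) := by
  have hk := ZMod.val_lt k
  have hcast : ((2 * m - 1 - 1 - k.val : ℕ) : ZMod (2 * m - 1)) = -k - 1 := by
    rw [Nat.cast_sub (by omega), Nat.cast_sub (by omega), ZMod.natCast_self,
      ZMod.natCast_zmod_val]
    push_cast
    ring
  unfold oddSwaps cyclicLabel
  rw [← hcast, ZMod.val_natCast_of_lt (by omega)]
  simp only [Nat.even_iff, Nat.odd_iff]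
  split_ifs <;> omega

lemma setOf_pairs_eq_image_mirrorPairs :
    {p : Sym2 ℕ | ∃ t : ℕ, 1 ≤ t ∧ t ≤ m - 1 ∧ p = s(2 * t, 2 * t + 1)} =
      Sym2.map (cyclicLabel m) '' mirrorPairs 0 := by
  have hpair : ∀ v : ℕ, 0 < v → v < m →
      Sym2.map (cyclicLabel m) s((0 : ZMod (2 * m - 1)) + v, 0 - v) = s(2 * v, 2 * v + 1) :=
    fun v hv0 hv => by
      rw [zero_add, zero_sub, Sym2.map_mk, cyclicLabel_natCast hv,
        cyclicLabel_neg_natCast hv0 hv, Sym2.eq_swap]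
  ext p
  constructor
  · rintro ⟨v, hv0, hv, rfl⟩
    have hne : (v : ZMod (2 * m - 1)) ≠ 0 := by
      rw [← ZMod.val_ne_zero, ZMod.val_natCast_of_lt (by omega)]
      omega
    exact ⟨_, ⟨v, hne, rfl⟩, hpair v (by omega) (by omega)⟩
  · rintro ⟨_, ⟨t, ht, rfl⟩, rfl⟩
    have htv := ZMod.val_lt t
    have htv0 := (ZMod.val_ne_zero t).mpr ht
    rcases lt_or_ge t.val m with h | h
    · refine ⟨t.val, by omega, by omega, ?_⟩
      rw [← hpair t.val (by omega) h, ZMod.natCast_zmod_val]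
    · obtain ⟨u, hu0, hu, rfl⟩ : ∃ u : ℕ, 0 < u ∧ u < m ∧ t = -(u : ZMod (2 * m - 1)) :=
        ⟨2 * m - 1 - t.val, by omega, by omega, by
          rw [Nat.cast_sub htv.le, ZMod.natCast_self, ZMod.natCast_zmod_val, zero_sub, neg_neg]⟩
      refine ⟨u, hu0, by omega, ?_⟩
      rw [← hpair u hu0 hu]
      simp only [Sym2.map_mk, zero_add, zero_sub, neg_neg]
      exact Sym2.eq_swap

end CyclicLabel

lemma closure_le_dihedralAlong_inf_fixingSubgroup {m : ℕ} [NeZero (2 * m - 1)]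
    {r0 r1 : Perm ℕ}
    (hr0 : ∀ a, r0 a = evenSwaps m a) (hr1 : ∀ a, r1 a = oddSwaps m a) :
    Subgroup.closure {r0, r1} ≤
      dihedralAlong (cyclicLabel m) ⊓ fixingSubgroup (Perm ℕ) (range (cyclicLabel m))ᶜ := by
  rw [Subgroup.closure_le, Set.insert_subset_iff, Set.singleton_subset_iff]
  simp only [SetLike.mem_coe, Subgroup.mem_inf, mem_fixingSubgroup_iff, range_cyclicLabel,
    mem_compl_iff, Perm.smul_def]
  refine ⟨⟨⟨-1, 0, fun j => ?_⟩, fun a ha => ?_⟩, ⟨-1, -1, fun j => ?_⟩, fun a ha => ?_⟩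
  · rw [hr0, evenSwaps_cyclicLabel, Units.neg_smul, one_smul, add_zero]
  · rw [hr0, evenSwaps_of_notMem_Icc ha]
  · rw [hr1, oddSwaps_cyclicLabel, Units.neg_smul, one_smul, sub_eq_add_neg]
  · rw [hr1, oddSwaps_of_notMem_Icc ha]

theorem orbit_and_stabilizer_odd_case (m : ℕ) (hm : 3 ≤ m) (r0 r1 : Equiv.Perm ℕ)
    (hr0 : ∀ a : ℕ, r0 a =
      if Even a ∧ 2 ≤ a ∧ a ≤ 2 * m - 2 then a + 1
      else if Odd a ∧ 3 ≤ a ∧ a ≤ 2 * m - 1 then a - 1 else a)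
    (hr1 : ∀ a : ℕ, r1 a =
      if Odd a ∧ 1 ≤ a ∧ a ≤ 2 * m - 3 then a + 1
      else if Even a ∧ 2 ≤ a ∧ a ≤ 2 * m - 2 then a - 1 else a)
    (Y0 : Set (Sym2 ℕ))
    (hY0 : Y0 = {p | ∃ t : ℕ, 1 ≤ t ∧ t ≤ m - 1 ∧ p = s(2 * t, 2 * t + 1)}) :
    {B : Set (Sym2 ℕ) |
        ∃ w ∈ Subgroup.closure ({r0, r1} : Set (Equiv.Perm ℕ)),
          B = Sym2.map ⇑w '' Y0}.ncard = 2 * m - 1 ∧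
    {w : Equiv.Perm ℕ |
        w ∈ Subgroup.closure ({r0, r1} : Set (Equiv.Perm ℕ)) ∧
          Sym2.map ⇑w '' Y0 = Y0}
      = (Subgroup.closure ({r0} : Set (Equiv.Perm ℕ)) : Set (Equiv.Perm ℕ)) := by
  have : NeZero (2 * m - 1) := ⟨by omega⟩
  have hodd : Odd (2 * m - 1) := ⟨m - 1, by omega⟩
  replace hr0 : ∀ a, r0 a = evenSwaps m a := hr0
  replace hr1 : ∀ a, r1 a = oddSwaps m a := hr1
  have hH := closure_le_dihedralAlong_inf_fixingSubgroup hr0 hr1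
  have hr0F := (hH (Subgroup.subset_closure (mem_insert r0 {r1}))).2
  have hr0f : ∀ j, r0 (cyclicLabel m j) = cyclicLabel m (-j) := fun j =>
    (hr0 _).trans (evenSwaps_cyclicLabel j)
  have hρ : ∀ j, (r0 * r1) (cyclicLabel m j) = cyclicLabel m (j + 1) := fun j => by
    rw [Perm.mul_apply, hr1, oddSwaps_cyclicLabel, hr0f, neg_sub, sub_neg_eq_add, add_comm]
  rw [setOf_pairs_eq_image_mirrorPairs] at hY0
  subst hY0
  simp only [Sym2.image_map_perm_eq_smul]
  refine ⟨?_, Set.ext fun w =>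
    ⟨fun ⟨hw, hwY⟩ => ?_, fun hw => ⟨Subgroup.closure_mono (by simp) hw, ?_⟩⟩⟩
  · rw [setOf_smul_eq_range_mirrorPairs (hH.trans inf_le_left)
      (mul_mem (Subgroup.subset_closure (by simp)) (Subgroup.subset_closure (by simp))) hρ,
      ncard_range_of_injective (image_mirrorPairs_injective hodd cyclicLabel_injective),
      Nat.card_zmod]
  · rcases eq_one_or_eq_of_smul_image_mirrorPairs hodd cyclicLabel_injective (hH hw) hr0F hr0f
      hwY with rfl | rfl
    · exact one_mem _
    · exact Subgroup.subset_closure rfl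
  · refine (Subgroup.closure_le (stabilizer (Perm ℕ) _)).mpr ?_ hw
    rw [Set.singleton_subset_iff, SetLike.mem_coe, mem_stabilizer_iff,
      smul_image_map_mirrorPairs (ε := -1) (k := 0) fun j => by simp [hr0f], smul_zero,
      zero_add]
end

section
/- Let m = 2m' be even, m ≥ 4, n = 2m. With α = ε₁ - ε_{2m} and Y₂ = {α_{2t} : 1 ≤ t ≤ m-1} ∪ {α}, the set Y₁ = {α_{2t-1} : 1 ≤ t ≤ m} contains no root symmetric under i ↦ 2m+1-i, while Y₂ contains exactly two symmetric roots, namely α and α_m = α_{2m'}. Consequently Y₁ and Y₂ lie in different orbits under any subgroup of Sym(2m) commuting with the involution i ↦ 2m+1-i. -/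
/-!
A symmetry `w` that commutes with the reflection `ι` on the support of a root maps the root to a
`ι`-symmetric one only if the root was `ι`-symmetric already. A root `s(a, b)` is `ι`-symmetric
exactly when `a + b = 2m + 1`; this never happens in `Y₁`, since `4t - 1 = 2m + 1` would make
`m + 1` even, while `Y₂` contains the symmetric root `s(1, 2m)`. So no such `w` maps `Y₁` onto `Y₂`.
-/

namespace Sym2

theorem map_map_eq_self_iff_of_injective {α β : Type*} {f : α → β} (hf : Function.Injective f)
    {ι : α → α} {κ : β → β} {p : Sym2 α} (h : ∀ a ∈ p, f (ι a) = κ (f a)) :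
    map κ (map f p) = map f p ↔ map ι p = p := by
  have hcomm : map κ (map f p) = map f (map ι p) := by
    rw [map_map, map_map]
    exact map_congr fun a ha => (h a ha).symm
  rw [hcomm]
  exact (map.injective hf).eq_iff

theorem pair_sub_eq_self_iff {N a b : ℕ} (ha : a ≤ N) (hb : b ≤ N) :
    s(N - a, N - b) = s(a, b) ↔ a + b = N := by
  rw [eq_iff]
  omega

end Sym2

theorem Y1_Y2_different_orbits (m m' : ℕ) (hm : m = 2 * m') (hm4 : 4 ≤ m)
    (ι : ℕ → ℕ) (hι : ∀ a, ι a = 2 * m + 1 - a)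
    (Y1 Y2 : Set (Sym2 ℕ))
    (hY1 : Y1 = {p | ∃ t : ℕ, 1 ≤ t ∧ t ≤ m ∧ p = s(2 * t - 1, 2 * t)})
    (hY2 : Y2 = {p | ∃ t : ℕ, 1 ≤ t ∧ t ≤ m - 1 ∧ p = s(2 * t, 2 * t + 1)}
      ∪ {s(1, 2 * m)}) :
    {p ∈ Y1 | Sym2.map ι p = p} = ∅ ∧
    {p ∈ Y2 | Sym2.map ι p = p} = {s(1, 2 * m), s(m, m + 1)} ∧
    (∀ w : Equiv.Perm ℕ,
      Set.MapsTo ⇑w (Set.Icc 1 (2 * m)) (Set.Icc 1 (2 * m)) →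
      (∀ a ∈ Set.Icc 1 (2 * m), w (ι a) = ι (w a)) →
      Sym2.map ⇑w '' Y1 ≠ Y2) := by
  have hsymm {a b : ℕ} (ha : a ≤ 2 * m + 1) (hb : b ≤ 2 * m + 1) :
      Sym2.map ι s(a, b) = s(a, b) ↔ a + b = 2 * m + 1 := by
    rw [Sym2.map_mk, hι, hι]
    exact Sym2.pair_sub_eq_self_iff ha hb
  have hY1_symm : {p ∈ Y1 | Sym2.map ι p = p} = ∅ := by
    refine Set.eq_empty_of_forall_notMem ?_
    rintro _ ⟨hp, hfix⟩
    obtain ⟨t, ht1, htm, rfl⟩ := hY1 ▸ hp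
    rw [hsymm (by omega) (by omega)] at hfix
    omega
  refine ⟨hY1_symm, ?_, ?_⟩
  · ext p
    simp only [hY2, Set.mem_union, Set.mem_ofPred_eq, Set.mem_singleton_iff,
      Set.mem_insert_iff]
    constructor
    · rintro ⟨⟨t, ht1, htm, rfl⟩ | rfl, hfix⟩
      · rw [hsymm (by omega) (by omega)] at hfix
        right
        congr <;> omega
      · exact Or.inl rfl
    · rintro (rfl | rfl)
      · exact ⟨Or.inr rfl, (hsymm (by omega) (by omega)).2 (by omega)⟩
      · exact ⟨Or.inl ⟨m', by omega, by omega, by rw [hm]⟩,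
          (hsymm (by omega) (by omega)).2 (by omega)⟩
  · intro w _ hcomm himage
    obtain ⟨p, hp, hwp⟩ : s(1, 2 * m) ∈ Sym2.map w '' Y1 := himage ▸ hY2 ▸ Or.inr rfl
    refine hY1_symm.subset ⟨hp, ?_⟩
    obtain ⟨t, ht1, htm, rfl⟩ := hY1 ▸ hp
    have hcomm_p : ∀ a ∈ s(2 * t - 1, 2 * t), w (ι a) = ι (w a) := fun a ha =>
      hcomm a (by rcases Sym2.mem_iff.1 ha with rfl | rfl <;> constructor <;> omega)
    rw [← Sym2.map_map_eq_self_iff_of_injective w.injective hcomm_p, hwp,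
      hsymm (by omega) (by omega)]
    omega
end
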